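/- Let 2 ≤ d1 ≤ d2, d = d1 + d2, and consider the line arrangement in ℙ²(ℂ) given by f = x·(y − z)·∏_{i=1}^{d1−1}(x − i y)·∏_{j=2}^{d2}(x − j z) = 0. Then: the point (0:0:1) has multiplicity d1, the point (0:1:0) has multiplicity d2, there are exactly d1 − 2 triple points, all lying on the line y = z (namely the points (i:1:1) for 2 ≤ i ≤ d1 − 1), and all other singular points are double points. -/

import Mathlib

open scoped Classical

/-- The number of linear factors of
`f = x (y - z) ∏_{i=1}^{d1-1}(x - i y) ∏_{j=2}^{d2}(x - j z)`
vanishing at the vector `v`, i.e. the multiplicity of the corresponding projective point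
with respect to this line arrangement. -/
noncomputable def arrMult2 (d1 d2 : ℕ) (v : Fin 3 → ℂ) : ℕ :=
  (if v 0 = 0 then 1 else 0) + (if v 1 = v 2 then 1 else 0)
    + ((Finset.range (d1 - 1)).filter (fun i => v 0 = ((i : ℂ) + 1) * v 1)).card
    + ((Finset.range (d2 - 1)).filter (fun j => v 0 = ((j : ℂ) + 2) * v 2)).card

/-!
A point `(a : b : c)` lies on at most one line `x = k y` of the first pencil unless `a = b = 0`,
where it lies on all of them; likewise for the pencil `x = k z` and `a = c = 0`. Away from
`x = 0` the multiplicity is therefore at most `1 + 1 + [b = c]`, and equality forces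
`b = c ≠ 0` and `a = (i + 1) b = (j + 2) b`, i.e. the point `(i + 1 : 1 : 1)` with `i = j + 1`.
On `x = 0` the pencils contribute only through `(0 : 0 : 1)` and `(0 : 1 : 0)`.
-/

open Finset

noncomputable def pencilCount (n : ℕ) (e a b : ℂ) : ℕ :=
  #((range n).filter fun i : ℕ => a = ((i : ℂ) + e) * b)

/-- In `arrMult2`, `Finset.range` is coerced to `Finset ℂ` through the `Finset` monad. -/
lemma card_filter_bind_range_natCast (n : ℕ) (p : ℂ → Prop) :
    #{z ∈ (do let i ← range n; pure (i : ℂ)) | p z} =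
      #((range n).filter fun i : ℕ => p i) := by
  have hmap : (do let i ← range n; pure (i : ℂ)) = (range n).map Nat.castEmbedding := by
    ext; simp
  rw [hmap, filter_map, card_map]
  rfl

lemma arrMult2_eq_pencilCount (d1 d2 : ℕ) (v : Fin 3 → ℂ) :
    arrMult2 d1 d2 v = (if v 0 = 0 then 1 else 0) + (if v 1 = v 2 then 1 else 0)
      + pencilCount (d1 - 1) 1 (v 0) (v 1) + pencilCount (d2 - 1) 2 (v 0) (v 2) := by
  unfold arrMult2 pencilCount
  rw [card_filter_bind_range_natCast, card_filter_bind_range_natCast]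

namespace pencilCount

variable {n : ℕ} {e a b : ℂ}

lemma zero_zero : pencilCount n e 0 0 = n := by
  simp [pencilCount]

lemma right_zero (ha : a ≠ 0) : pencilCount n e a 0 = 0 := by
  simp [pencilCount, ha]

lemma left_zero (hb : b ≠ 0) (he : ∀ i : ℕ, (i : ℂ) + e ≠ 0) :
    pencilCount n e 0 b = 0 := by
  simp [pencilCount, eq_comm (a := (0 : ℂ)), hb, he]

lemma le_one (hb : b ≠ 0) : pencilCount n e a b ≤ 1 := by
  refine card_le_one.mpr fun i hi j hj => ?_
  simp only [mem_filter] at hi hj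
  have hij : (i : ℂ) + e = j + e := mul_right_cancel₀ hb (hi.2.symm.trans hj.2)
  exact_mod_cast add_right_cancel hij

lemma le_one_of_left_ne_zero (ha : a ≠ 0) : pencilCount n e a b ≤ 1 := by
  rcases eq_or_ne b 0 with rfl | hb
  · simp [right_zero ha]
  · exact le_one hb

lemma eq_one {m : ℕ} (hm : m < n) (hb : b ≠ 0) (ha : a = (m + e) * b) :
    pencilCount n e a b = 1 := by
  refine le_antisymm (le_one hb) (one_le_card.mpr ⟨m, ?_⟩)
  simp [hm, ha]

lemma exists_of_pos (h : 0 < pencilCount n e a b) : ∃ i < n, a = (i + e) * b := by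
  obtain ⟨i, hi⟩ := card_pos.mp h
  simp only [mem_filter, mem_range] at hi
  exact ⟨i, hi⟩

end pencilCount

lemma natCast_add_two_ne_zero (i : ℕ) : (i : ℂ) + 2 ≠ 0 := by
  exact_mod_cast (i + 1).succ_ne_zero

lemma eq_smul_of_apply_eq {v : Fin 3 → ℂ} {t x y z : ℂ} (h0 : v 0 = t * x) (h1 : v 1 = t * y)
    (h2 : v 2 = t * z) : v = t • ![x, y, z] := by
  ext k
  fin_cases k <;> simp [h0, h1, h2]

section

variable {d1 d2 : ℕ}

lemma arrMult2_zero_zero_one (hd1 : 1 ≤ d1) : arrMult2 d1 d2 ![0, 0, 1] = d1 := by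
  simp [arrMult2_eq_pencilCount, pencilCount.zero_zero,
    pencilCount.left_zero one_ne_zero natCast_add_two_ne_zero]
  omega

lemma arrMult2_zero_one_zero (hd2 : 1 ≤ d2) : arrMult2 d1 d2 ![0, 1, 0] = d2 := by
  simp [arrMult2_eq_pencilCount, pencilCount.zero_zero,
    pencilCount.left_zero one_ne_zero Nat.cast_add_one_ne_zero]
  omega

lemma arrMult2_natCast_one_one {i : ℕ} (hi2 : 2 ≤ i) (hid1 : i < d1) (hid2 : i ≤ d2) :
    arrMult2 d1 d2 ![(i : ℂ), 1, 1] = 3 := by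
  have hi : (i : ℂ) ≠ 0 := Nat.cast_ne_zero.mpr (by omega)
  have h1 : pencilCount (d1 - 1) 1 (i : ℂ) 1 = 1 :=
    pencilCount.eq_one (m := i - 1) (by omega) one_ne_zero
      (by push_cast [Nat.cast_sub (by omega : 1 ≤ i)]; ring)
  have h2 : pencilCount (d2 - 1) 2 (i : ℂ) 1 = 1 :=
    pencilCount.eq_one (m := i - 2) (by omega) one_ne_zero (by push_cast [Nat.cast_sub hi2]; ring)
  simp [arrMult2_eq_pencilCount, hi, h1, h2]

lemma eq_smul_of_three_le_arrMult2_of_fst_eq_zero {v : Fin 3 → ℂ} (hv0 : v 0 = 0)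
    (h : 3 ≤ arrMult2 d1 d2 v) :
    (∃ t : ℂ, v = t • ![0, 0, 1]) ∨ (∃ t : ℂ, v = t • ![0, 1, 0]) := by
  by_cases hb : v 1 = 0
  · exact Or.inl ⟨v 2, eq_smul_of_apply_eq (by simp [hv0]) (by simp [hb]) (by simp)⟩
  by_cases hc : v 2 = 0
  · exact Or.inr ⟨v 1, eq_smul_of_apply_eq (by simp [hv0]) (by simp) (by simp [hc])⟩
  rw [arrMult2_eq_pencilCount, hv0, pencilCount.left_zero hb Nat.cast_add_one_ne_zero,
    pencilCount.left_zero hc natCast_add_two_ne_zero] at h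
  split_ifs at h <;> omega

lemma exists_eq_smul_of_three_le_arrMult2_of_fst_ne_zero {v : Fin 3 → ℂ} (hv0 : v 0 ≠ 0)
    (h : 3 ≤ arrMult2 d1 d2 v) :
    ∃ i ∈ Icc 2 (d1 - 1), ∃ t : ℂ, v = t • ![(i : ℂ), 1, 1] := by
  have hle1 := pencilCount.le_one_of_left_ne_zero (n := d1 - 1) (e := 1) (b := v 1) hv0
  have hle2 := pencilCount.le_one_of_left_ne_zero (n := d2 - 1) (e := 2) (b := v 2) hv0
  rw [arrMult2_eq_pencilCount, if_neg hv0] at h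
  have hbc : v 1 = v 2 := by
    by_contra hbc
    rw [if_neg hbc] at h
    omega
  rw [if_pos hbc] at h
  obtain ⟨i, hi, hai⟩ :=
    pencilCount.exists_of_pos (by omega : 0 < pencilCount (d1 - 1) 1 (v 0) (v 1))
  obtain ⟨j, -, haj⟩ :=
    pencilCount.exists_of_pos (by omega : 0 < pencilCount (d2 - 1) 2 (v 0) (v 2))
  have hb : v 1 ≠ 0 := fun hb => hv0 (by simp [hai, hb])
  have hij : i = j + 1 := by
    have : (i : ℂ) + 1 = j + 2 := mul_right_cancel₀ hb (hai.symm.trans (hbc ▸ haj))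
    exact_mod_cast (by push_cast; linear_combination this : (i : ℂ) = (j + 1 : ℕ))
  exact ⟨i + 1, mem_Icc.mpr ⟨by omega, by omega⟩, v 1,
    eq_smul_of_apply_eq (by rw [hai]; push_cast; ring) (by simp) (by simp [hbc])⟩

end

theorem stmt_10 (d1 d2 : ℕ) (h1 : 2 ≤ d1) (h12 : d1 ≤ d2) :
    -- the point (0:0:1) has multiplicity d1 and the point (0:1:0) has multiplicity d2
    arrMult2 d1 d2 ![0, 0, 1] = d1 ∧
    arrMult2 d1 d2 ![0, 1, 0] = d2 ∧
    -- the d1 - 2 triple points (i:1:1), 2 ≤ i ≤ d1 - 1, all on the line y = z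
    (∀ i ∈ Finset.Icc 2 (d1 - 1), arrMult2 d1 d2 ![(i : ℂ), 1, 1] = 3) ∧
    -- any point of multiplicity ≥ 3 is one of the points above;
    -- in particular all other singular points are double points
    (∀ v : Fin 3 → ℂ, v ≠ 0 → 3 ≤ arrMult2 d1 d2 v →
      (∃ t : ℂ, v = t • ![0, 0, 1]) ∨ (∃ t : ℂ, v = t • ![0, 1, 0]) ∨
      ∃ i ∈ Finset.Icc 2 (d1 - 1), ∃ t : ℂ, v = t • ![(i : ℂ), 1, 1]) := by
  refine ⟨arrMult2_zero_zero_one (by omega), arrMult2_zero_one_zero (by omega),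
    fun i hi => ?_, fun v _ h => ?_⟩
  · obtain ⟨hi2, hi1⟩ := mem_Icc.mp hi
    exact arrMult2_natCast_one_one hi2 (by omega) (by omega)
  · by_cases hv0 : v 0 = 0
    · exact (eq_smul_of_three_le_arrMult2_of_fst_eq_zero hv0 h).elim Or.inl (Or.inr ∘ Or.inl)
    · exact Or.inr (Or.inr (exists_eq_smul_of_three_le_arrMult2_of_fst_ne_zero hv0 h))
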